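/- The vertex-cover reduction is correct: a graph G = (V,E) with |V| = s, |E| = r has a vertex cover of size at most k (k ≤ s) if and only if the associated temporal election instance with r + s − k agents (edge agents and dummy agents), s timesteps, and unique (singleton) approval sets admits an outcome giving every agent utility at least 1. -/

import Mathlib

/-- The utility of agent `i` under outcome `o`. -/
noncomputable def util {P : Type*} {n ℓ : ℕ}
    (S : Fin n → Fin ℓ → Finset P) (i : Fin n) (o : Fin ℓ → P) : ℕ :=
  Nat.card {t : Fin ℓ // o t ∈ S i t}

lemma util_one_le_iff {P : Type*} {n ℓ : ℕ}
    (S : Fin n → Fin ℓ → Finset P) (i : Fin n) (o : Fin ℓ → P) :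
    1 ≤ util S i o ↔ ∃ t, o t ∈ S i t := by
  rw [util, Nat.one_le_iff_ne_zero, Nat.card_ne_zero]
  have : Finite {t : Fin ℓ // o t ∈ S i t} := Subtype.finite
  simp [nonempty_subtype, this]

/-- Correctness of the Vertex Cover reduction: a graph on `s` vertices with `r`
(distinct, non-loop) edges `e : Fin r → Sym2 (Fin s)` has a vertex cover of size
at most `k ≤ s` iff the temporal election instance with `r + s − k` agents (the
first `r` being edge agents, the rest dummies), `s` timesteps, and projects
`Sum.inl i = q_i`, `Sum.inr t = p_t`, where edge agent `i` approves `{p_t}` at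
timestep `t` if `v_t` is an endpoint of its edge and `{q_i}` otherwise, and each
dummy agent `i` approves `{q_i}` at every timestep, admits an outcome giving
every agent utility at least 1. -/
theorem vertexCover_reduction (s r k : ℕ) (hk : k ≤ s)
    (e : Fin r → Sym2 (Fin s)) (he : Function.Injective e)
    (hnd : ∀ j : Fin r, ¬(e j).IsDiag)
    (S : Fin (r + s - k) → Fin s → Finset (Fin (r + s - k) ⊕ Fin s))
    (hS : ∀ (i : Fin (r + s - k)) (t : Fin s), S i t =
      if h : (i : ℕ) < r then
        (if t ∈ e ⟨(i : ℕ), h⟩ then {Sum.inr t} else {Sum.inl i})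
      else {Sum.inl i}) :
    (∃ V' : Finset (Fin s), V'.card ≤ k ∧ ∀ j : Fin r, ∃ v ∈ V', v ∈ e j) ↔
      (∃ o : Fin s → (Fin (r + s - k) ⊕ Fin s),
        ∀ i : Fin (r + s - k), 1 ≤ util S i o) := by
  classical
  constructor
  · -- vertex cover → good outcome
    rintro ⟨V', hVc, hcov⟩
    have hcard : s - k ≤ (V'ᶜ).card := by
      rw [Finset.card_compl, Fintype.card_fin]; omega
    set g := (V'ᶜ).orderEmbOfCardLe hcard with hg
    refine ⟨fun u => if h : ∃ d : Fin (s - k), g d = u then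
        Sum.inl ⟨r + ((h.choose : Fin (s - k)) : ℕ), by
          have := h.choose.isLt; omega⟩
      else Sum.inr u, ?_⟩
    intro i
    rw [util_one_le_iff]
    by_cases hi : (i : ℕ) < r
    · obtain ⟨v, hvV, hve⟩ := hcov ⟨i, hi⟩
      refine ⟨v, ?_⟩
      have hno : ¬ ∃ d : Fin (s - k), g d = v := by
        rintro ⟨d, hd⟩
        have hmem := Finset.orderEmbOfCardLe_mem (V'ᶜ) hcard d
        rw [← hg, hd, Finset.mem_compl] at hmem
        exact hmem hvV
      rw [dif_neg hno, hS, dif_pos hi, if_pos hve]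
      exact Finset.mem_singleton_self _
    · have hlt : (i : ℕ) - r < s - k := by have := i.isLt; omega
      refine ⟨g ⟨(i : ℕ) - r, hlt⟩, ?_⟩
      have hex : ∃ d' : Fin (s - k), g d' = g ⟨(i : ℕ) - r, hlt⟩ :=
        ⟨⟨(i : ℕ) - r, hlt⟩, rfl⟩
      rw [dif_pos hex]
      have hd' : hex.choose = ⟨(i : ℕ) - r, hlt⟩ := g.injective hex.choose_spec
      rw [hS, dif_neg hi]
      simp only [Finset.mem_singleton, Sum.inl.injEq]
      apply Fin.ext
      rw [Fin.val_mk, hd']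
      simp only []
      omega
  · -- good outcome → vertex cover
    rintro ⟨o, ho⟩
    choose t ht using fun i => (util_one_le_iff S i o).mp (ho i)
    have hdich : ∀ i : Fin (r + s - k),
        (∃ h : (i : ℕ) < r, t i ∈ e ⟨(i : ℕ), h⟩ ∧ o (t i) = Sum.inr (t i)) ∨
          o (t i) = Sum.inl i := by
      intro i
      have hti := ht i
      rw [hS] at hti
      by_cases hi : (i : ℕ) < r
      · rw [dif_pos hi] at hti
        by_cases hte : t i ∈ e ⟨(i : ℕ), hi⟩
        · rw [if_pos hte] at hti
          exact Or.inl ⟨hi, hte, Finset.mem_singleton.mp hti⟩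
        · rw [if_neg hte] at hti
          exact Or.inr (Finset.mem_singleton.mp hti)
      · rw [dif_neg hi] at hti
        exact Or.inr (Finset.mem_singleton.mp hti)
    set D : Finset (Fin (r + s - k)) :=
      Finset.univ.filter (fun i => o (t i) = Sum.inl i) with hD
    set Cov : Finset (Fin s) :=
      Finset.univ.filter (fun u => o u = Sum.inr u) with hCov
    -- t is injective on D, with image disjoint from Cov
    have hinj : Set.InjOn t ↑D := by
      intro a ha b hb hab
      rw [hD, Finset.coe_filter] at ha hb
      have : (Sum.inl a : Fin (r + s - k) ⊕ Fin s) = Sum.inl b := by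
        rw [← ha.2, ← hb.2, hab]
      exact Sum.inl_injective this
    have himg : D.image t ⊆ Covᶜ := by
      intro u hu
      obtain ⟨i, hi, rfl⟩ := Finset.mem_image.mp hu
      rw [hD, Finset.mem_filter] at hi
      rw [Finset.mem_compl, hCov, Finset.mem_filter]
      rintro ⟨-, habs⟩
      rw [hi.2] at habs
      exact Sum.inl_ne_inr habs
    have h1 : D.card + Cov.card ≤ s := by
      have h2 := Finset.card_le_card himg
      rw [Finset.card_image_of_injOn hinj, Finset.card_compl,
        Fintype.card_fin] at h2
      have h3 : Cov.card ≤ s := by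
        simpa using Finset.card_le_univ Cov
      omega
    -- the edge agents in D, and the dummy agents
    set DE : Finset (Fin (r + s - k)) :=
      D.filter (fun i : Fin (r + s - k) => (i : ℕ) < r) with hDE
    have hDsplit : D.card = DE.card + (s - k) := by
      have hsplit := Finset.card_filter_add_card_filter_not
        (s := D) (p := fun i => (i : ℕ) < r)
      have hDum : D.filter (fun i : Fin (r + s - k) => ¬ (i : ℕ) < r) =
          Finset.univ.filter (fun i : Fin (r + s - k) => ¬ (i : ℕ) < r) := by
        apply Finset.ext
        intro i
        simp only [Finset.mem_filter, Finset.mem_univ, true_and, hD]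
        constructor
        · exact fun h => h.2
        · intro h2
          rcases hdich i with ⟨h3, -, -⟩ | h3
          · exact absurd h3 h2
          · exact ⟨h3, h2⟩
      have hEdgcard : (Finset.univ.filter
          (fun i : Fin (r + s - k) => ¬ (i : ℕ) < r)).card = s - k := by
        have hr : r ≤ r + s - k := by omega
        have hcompl := Finset.card_filter_add_card_filter_not
          (s := (Finset.univ : Finset (Fin (r + s - k))))
          (p := fun i => (i : ℕ) < r)
        have hmap : Finset.univ.filter (fun i : Fin (r + s - k) => (i : ℕ) < r)
            = Finset.univ.map (Fin.castLEEmb hr) := by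
          apply Finset.ext
          intro i
          simp only [Finset.mem_filter, Finset.mem_univ, true_and,
            Finset.mem_map, Fin.castLEEmb_apply]
          constructor
          · intro hi
            exact ⟨⟨(i : ℕ), hi⟩, by apply Fin.ext; simp⟩
          · rintro ⟨j, -, rfl⟩
            simpa using j.isLt
        simp only [hmap, Finset.card_map, Finset.card_univ,
          Fintype.card_fin] at hcompl
        omega
      rw [hDum, hEdgcard] at hsplit
      rw [← hDE] at hsplit
      omega
    have hmk : Cov.card + DE.card ≤ k := by omega
    -- build the cover
    set w : {i // i ∈ DE} → Fin s := fun x =>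
      (e ⟨((x.1 : Fin (r + s - k)) : ℕ),
        (Finset.mem_filter.mp x.2).2⟩).out.1 with hw
    refine ⟨Cov ∪ DE.attach.image w, ?_, ?_⟩
    · calc (Cov ∪ DE.attach.image w).card
          ≤ Cov.card + (DE.attach.image w).card := Finset.card_union_le _ _
        _ ≤ Cov.card + DE.attach.card :=
            Nat.add_le_add_left (Finset.card_image_le) _
        _ = Cov.card + DE.card := by rw [Finset.card_attach]
        _ ≤ k := hmk
    · intro j
      have hjN : (j : ℕ) < r + s - k := by have := j.isLt; omega
      set i : Fin (r + s - k) := ⟨(j : ℕ), hjN⟩ with hi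
      rcases hdich i with ⟨h, hte, hor⟩ | h
      · refine ⟨t i, ?_, ?_⟩
        · apply Finset.mem_union_left
          rw [hCov, Finset.mem_filter]
          exact ⟨Finset.mem_univ _, hor⟩
        · have : (⟨(i : ℕ), h⟩ : Fin r) = j := by apply Fin.ext; simp [hi]
          rwa [this] at hte
      · have hiD : i ∈ D := by
          rw [hD, Finset.mem_filter]; exact ⟨Finset.mem_univ _, h⟩
        have hiDE : i ∈ DE := by
          rw [hDE, Finset.mem_filter]
          exact ⟨hiD, by simpa [hi] using j.isLt⟩
        refine ⟨w ⟨i, hiDE⟩, ?_, ?_⟩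
        · apply Finset.mem_union_right
          exact Finset.mem_image_of_mem w (Finset.mem_attach _ _)
        · rw [hw]
          have hij : (⟨((i : Fin (r + s - k)) : ℕ),
              (Finset.mem_filter.mp hiDE).2⟩ : Fin r) = j := by
            apply Fin.ext; simp [hi]
          simp only [hij]
          exact Sym2.out_fst_mem _
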